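/- arXiv:math/0611887 — 4 statements merged into one kernel-verified Lean document; each statement's English description precedes it below -/
import Mathlib

section
/- If f : M → M' is a map between modules over Z[s^{±1}, t^{±1}] satisfying f(0) = 0 and f(t·x + (1−st)·y) = t·f(x) + (1−st)·f(y) for all x, y ∈ M, then for any element y ∈ M that lies in both t·M and (1−st)·M, one has f(−y) = −f(y). -/
noncomputable section

/-- The Laurent polynomial ring `ℤ[s^{±1}, t^{±1}]` in two variables,
realized as the group algebra of `ℤ × ℤ` over `ℤ`. -/
abbrev L : Type := AddMonoidAlgebra ℤ (ℤ × ℤ)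

/-- The variable `s`. -/
def sL : L := AddMonoidAlgebra.single (1, 0) 1
/-- The variable `t`. -/
def tL : L := AddMonoidAlgebra.single (0, 1) 1
/-- The inverse `s⁻¹`. -/
def sLi : L := AddMonoidAlgebra.single (-1, 0) 1
/-- The inverse `t⁻¹`. -/
def tLi : L := AddMonoidAlgebra.single (0, -1) 1

/-- `s` as a unit of `L`. -/
def sU : Lˣ where
  val := sL
  inv := sLi
  val_inv := by
    simp [sL, sLi, AddMonoidAlgebra.single_mul_single, AddMonoidAlgebra.one_def, Prod.ext_iff] <;> rfl
  inv_val := by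
    simp [sL, sLi, AddMonoidAlgebra.single_mul_single, AddMonoidAlgebra.one_def, Prod.ext_iff] <;> rfl

/-- The submodule `(1-st)M`. -/
def Dsub (M : Type) [AddCommGroup M] [Module L M] : Submodule L M :=
  LinearMap.range (LinearMap.lsmul L M (1 - sL * tL))

/-- The `s`-orbit `O_s(X)` of a subset `X ⊆ M`. -/
def Os {M : Type} [AddCommGroup M] [Module L M] (X : Set M) : Set M :=
  { y | ∃ (n : ℤ) (x : M), x ∈ X ∧ y = ((sU ^ n : Lˣ) : L) • x }

/-- `A` is a set of coset representatives for `M/(1-st)M`. -/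
def IsCR (M : Type) [AddCommGroup M] [Module L M] (A : Set M) : Prop :=
  ∀ x : M, ∃! a, a ∈ A ∧ x - a ∈ Dsub M

/-- `f` preserves the four Alexander biquandle operations. -/
def IsBqHom {M M' : Type} [AddCommGroup M] [Module L M] [AddCommGroup M'] [Module L M']
    (f : M → M') : Prop :=
  (∀ x y : M, f (tL • x + (1 - sL * tL) • y) = tL • f x + (1 - sL * tL) • f y) ∧
  (∀ x : M, f (sL • x) = sL • f x) ∧
  (∀ x y : M, f (tLi • x + (1 - sLi * tLi) • y) = tLi • f x + (1 - sLi * tLi) • f y) ∧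
  (∀ x : M, f (sLi • x) = sLi • f x)

/-! If `y = t • w = (1 - st) • z`, the functional equation with one argument zero gives
`f y = t • f w` and `f (-y) = (1 - st) • f (-z)`; with both arguments it gives
`f (t • w + (1 - st) • (-z)) = f y + f (-y)`, and the left side is `f 0 = 0`. -/

section

variable {R M M' : Type*} [Ring R] [AddCommGroup M] [Module R M] [AddCommGroup M'] [Module R M']
  {f : M → M'} {a b : R}

theorem map_smul_left_of_map_smul_add_smul (h0 : f 0 = 0)
    (h : ∀ x y : M, f (a • x + b • y) = a • f x + b • f y) (x : M) : f (a • x) = a • f x := by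
  simpa [h0] using h x 0

theorem map_smul_right_of_map_smul_add_smul (h0 : f 0 = 0)
    (h : ∀ x y : M, f (a • x + b • y) = a • f x + b • f y) (y : M) : f (b • y) = b • f y := by
  simpa [h0] using h 0 y

theorem map_neg_of_map_smul_add_smul (h0 : f 0 = 0)
    (h : ∀ x y : M, f (a • x + b • y) = a • f x + b • f y) {y : M}
    (hya : ∃ w, y = a • w) (hyb : ∃ z, y = b • z) : f (-y) = -f y := by
  obtain ⟨w, rfl⟩ := hya
  obtain ⟨z, hz⟩ := hyb
  have hsum : f (a • w) + f (-(a • w)) = 0 :=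
    calc f (a • w) + f (-(a • w)) = a • f w + b • f (-z) := by
          rw [map_smul_left_of_map_smul_add_smul h0 h, hz, ← smul_neg,
            map_smul_right_of_map_smul_add_smul h0 h]
      _ = f (a • w + b • -z) := (h w (-z)).symm
      _ = 0 := by rw [smul_neg, ← hz, add_neg_cancel, h0]
  exact eq_neg_of_add_eq_zero_right hsum

end

theorem stmt_2 {M M' : Type} [AddCommGroup M] [Module L M] [AddCommGroup M'] [Module L M']
    (f : M → M') (h0 : f 0 = 0)
    (h1 : ∀ x y : M, f (tL • x + (1 - sL * tL) • y) = tL • f x + (1 - sL * tL) • f y) :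
    ∀ y : M, (∃ w : M, y = tL • w) → (∃ z : M, y = (1 - sL * tL) • z) →
      f (-y) = -f y :=
  fun _ hw hz => map_neg_of_map_smul_add_smul h0 h1 hw hz
end
end

section
/- Let f : M → M' be an isomorphism of Alexander biquandles with f(0) = 0. Then the restriction h = f|_{(1−st)M} : (1−st)M → (1−st)M' is an isomorphism of Z[s^{±1}, t^{±1}]-modules; in particular h is additive, commutes with multiplication by s and t, and is a bijection between (1−st)M and (1−st)M'. -/
noncomputable section

/-!
Putting `y = 0`, resp. `x = 0`, into `f (t x + (1 - st) y) = t f x + (1 - st) f y` and using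
`f 0 = 0` shows that `f` commutes with `t` and with `1 - st`. Since `t` is invertible every `x`
is of the form `t x'`, so `f (x + (1 - st) y) = f x + (1 - st) f y`: this is additivity on
`(1 - st)M`. Commuting with `1 - st` and surjectivity make `f` map `(1 - st)M` onto `(1 - st)M'`.
-/

namespace AlexanderOp

variable {R M M' : Type*} [CommRing R] [AddCommGroup M] [Module R M] [AddCommGroup M']
  [Module R M'] {f : M → M'} {a b : R}
  (hf : ∀ x y : M, f (a • x + b • y) = a • f x + b • f y) (h0 : f 0 = 0)
include hf h0

theorem map_smul_left (x : M) : f (a • x) = a • f x := by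
  simpa [h0] using hf x 0

theorem map_smul_right (y : M) : f (b • y) = b • f y := by
  simpa [h0] using hf 0 y

theorem map_add_smul (ha : IsUnit a) (x y : M) : f (x + b • y) = f x + b • f y := by
  obtain ⟨u, rfl⟩ := ha
  have hx : (u : R) • (u⁻¹ • x) = x := by rw [← Units.smul_def, smul_inv_smul]
  calc f (x + b • y) = f ((u : R) • (u⁻¹ • x) + b • y) := by rw [hx]
    _ = (u : R) • f (u⁻¹ • x) + b • f y := hf _ _
    _ = f x + b • f y := by rw [← map_smul_left hf h0, hx]

theorem map_add_of_mem_range (ha : IsUnit a) (x : M) {y : M}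
    (hy : y ∈ LinearMap.range (LinearMap.lsmul R M b)) : f (x + y) = f x + f y := by
  obtain ⟨y, rfl⟩ := hy
  simp only [LinearMap.lsmul_apply, map_add_smul hf h0 ha, map_smul_right hf h0]

theorem mapsTo_range :
    Set.MapsTo f (LinearMap.range (LinearMap.lsmul R M b))
      (LinearMap.range (LinearMap.lsmul R M' b)) := by
  rintro _ ⟨y, rfl⟩
  exact ⟨f y, (map_smul_right hf h0 y).symm⟩

theorem surjOn_range (hsurj : Function.Surjective f) :
    Set.SurjOn f (LinearMap.range (LinearMap.lsmul R M b))
      (LinearMap.range (LinearMap.lsmul R M' b)) := by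
  rintro _ ⟨y', rfl⟩
  obtain ⟨y, rfl⟩ := hsurj y'
  exact ⟨b • y, ⟨y, rfl⟩, map_smul_right hf h0 y⟩

end AlexanderOp

theorem isUnit_tL : IsUnit tL :=
  IsUnit.of_mul_eq_one tLi <| by
    simp only [tL, tLi, AddMonoidAlgebra.single_mul_single, AddMonoidAlgebra.one_def, mul_one]
    rfl

theorem stmt_6 {M M' : Type} [AddCommGroup M] [Module L M] [AddCommGroup M'] [Module L M']
    (f : M → M') (hbij : Function.Bijective f) (hhom : IsBqHom f) (h0 : f 0 = 0) :
    Set.BijOn f (Dsub M : Set M) (Dsub M' : Set M') ∧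
    (∀ x ∈ Dsub M, ∀ y ∈ Dsub M, f (x + y) = f x + f y) ∧
    (∀ x ∈ Dsub M, f (sL • x) = sL • f x) ∧
    (∀ x ∈ Dsub M, f (tL • x) = tL • f x) := by
  obtain ⟨hop, hs, -, -⟩ := hhom
  exact ⟨⟨AlexanderOp.mapsTo_range hop h0, hbij.injective.injOn,
      AlexanderOp.surjOn_range hop h0 hbij.surjective⟩,
    fun x _ _ hy => AlexanderOp.map_add_of_mem_range hop h0 isUnit_tL x hy,
    fun x _ => hs x, fun x _ => AlexanderOp.map_smul_left hop h0 x⟩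
end
end

section
/- Let f : M → M' be an isomorphism of Alexander biquandles with f(0) = 0, h = f restricted to (1−st)M, and A a set of coset representatives of M/(1−st)M with 0 ∈ A. Then for every x ∈ M, writing x = α + ω with α ∈ A and ω ∈ (1−st)M uniquely, one has f(x) = f(α) + h(ω). -/
noncomputable section

/-! The operation `x ^ y = t x + (1 - st) y` is affine in both arguments, so a map preserving it
and fixing `0` commutes separately with `t •` and with `(1 - st) •`; writing `x + (1 - st) y` as
`t (t⁻¹ x) + (1 - st) y` then splits `f (x + (1 - st) y)` into `f x + f ((1 - st) y)`. -/

theorem tL_mul_tLi : tL * tLi = 1 := by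
  simp [tL, tLi, AddMonoidAlgebra.single_mul_single, AddMonoidAlgebra.one_def]
  rfl

section UpperOperation

variable {M M' : Type} [AddCommGroup M] [Module L M] [AddCommGroup M'] [Module L M']
  {f : M → M'} (hf : ∀ x y : M, f (tL • x + (1 - sL * tL) • y) = tL • f x + (1 - sL * tL) • f y)
  (h0 : f 0 = 0)
include hf h0

theorem map_tL_smul (x : M) : f (tL • x) = tL • f x := by
  simpa [h0] using hf x 0

theorem map_one_sub_smul (y : M) : f ((1 - sL * tL) • y) = (1 - sL * tL) • f y := by
  simpa [h0] using hf 0 y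

theorem map_add_of_mem_Dsub (x : M) {ω : M} (hω : ω ∈ Dsub M) : f (x + ω) = f x + f ω := by
  obtain ⟨y, rfl⟩ := hω
  have htx : tL • tLi • x = x := by rw [smul_smul, tL_mul_tLi, one_smul]
  simp only [LinearMap.lsmul_apply]
  calc f (x + (1 - sL * tL) • y)
      = tL • f (tLi • x) + (1 - sL * tL) • f y := by rw [← hf, htx]
    _ = f x + f ((1 - sL * tL) • y) := by
      rw [← map_tL_smul hf h0, htx, map_one_sub_smul hf h0]

end UpperOperation

theorem stmt_10_general {M M' : Type} [AddCommGroup M] [Module L M] [AddCommGroup M'] [Module L M']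
    (f : M → M') (hhom : IsBqHom f) (h0 : f 0 = 0)
    (A : Set M) :
    ∀ α ∈ A, ∀ ω ∈ Dsub M, f (α + ω) = f α + f ω :=
  fun α _ _ hω => map_add_of_mem_Dsub hhom.1 h0 α hω

theorem stmt_10 {M M' : Type} [AddCommGroup M] [Module L M] [AddCommGroup M'] [Module L M']
    (f : M → M') (hbij : Function.Bijective f) (hhom : IsBqHom f) (h0 : f 0 = 0)
    (A : Set M) (hA : IsCR M A) (h0A : (0 : M) ∈ A) :
    ∀ α ∈ A, ∀ ω ∈ Dsub M, f (α + ω) = f α + f ω :=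
  stmt_10_general f hhom h0 A
end
end

section
/- Under the hypotheses of the reverse direction of the main theorem (existence of module isomorphism h : (1−st)M → (1−st)M', coset representatives A, A' with 0 ∈ A, and a compatible bijection g : O_s(A) → O_s(A')), the map f : M → M' defined by f(α + ω) = g(α) + h(ω) satisfies f(s·x) = s·f(x) for all x ∈ M. -/
noncomputable section

/-! Write `x = α + ω` and `s • x = β + ω'` with `α, β ∈ A`. Since `β - s • α ∈ (1 - st)M` and
`β ∈ O_s(A)`, compatibility of `g` gives `g β = s • g α + h (β - s • α)`; as `h` is `L`-linear,
`h (β - s • α) + h ω' = h (s • ω) = s • h ω`, hence `f (s • x) = s • (g α + h ω) = s • f x`. -/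

theorem subset_Os {M : Type} [AddCommGroup M] [Module L M] (X : Set M) : X ⊆ Os X :=
  fun x hx => ⟨0, x, hx, by simp⟩

section Decomposition

variable {M M' : Type} [AddCommGroup M] [Module L M] [AddCommGroup M'] [Module L M']
  {h : Dsub M ≃ₗ[L] Dsub M'} {A : Set M} {g f : M → M'}

theorem apply_eq_of_sub_mem_Dsub
    (hf : ∀ α ∈ A, ∀ ω (hω : ω ∈ Dsub M), f (α + ω) = g α + (h ⟨ω, hω⟩ : M'))
    {α x : M} (hα : α ∈ A) (hx : x - α ∈ Dsub M) :
    f x = g α + (h ⟨x - α, hx⟩ : M') := by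
  simpa only [add_sub_cancel] using hf α hα (x - α) hx

theorem apply_eq_smul_add_of_sub_smul_mem_Dsub
    (hg2 : ∀ α ∈ A, ∀ ω (hω : ω ∈ Dsub M), sL • α + ω ∈ Os A →
      g (sL • α + ω) = sL • g α + (h ⟨ω, hω⟩ : M'))
    {α β : M} (hα : α ∈ A) (hβ : β ∈ A) (hβα : β - sL • α ∈ Dsub M) :
    g β = sL • g α + (h ⟨β - sL • α, hβα⟩ : M') := by
  have hβOs : sL • α + (β - sL • α) ∈ Os A := by
    rw [add_sub_cancel]
    exact subset_Os A hβ
  simpa only [add_sub_cancel] using hg2 α hα _ hβα hβOs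

end Decomposition

theorem stmt_13_general
    {M M' : Type} [AddCommGroup M] [Module L M] [AddCommGroup M'] [Module L M']
    (h : Dsub M ≃ₗ[L] Dsub M')
    (A : Set M) (hA : IsCR M A)
    (g : M → M')
    (hg2 : ∀ α ∈ A, ∀ ω (hω : ω ∈ Dsub M), sL • α + ω ∈ Os A →
      g (sL • α + ω) = sL • g α + (h ⟨ω, hω⟩ : M'))
    (f : M → M')
    (hf : ∀ α ∈ A, ∀ ω (hω : ω ∈ Dsub M), f (α + ω) = g α + (h ⟨ω, hω⟩ : M')) :
    ∀ x : M, f (sL • x) = sL • f x := by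
  intro x
  obtain ⟨α, ⟨hα, hxα⟩, -⟩ := hA x
  obtain ⟨β, ⟨hβ, hsxβ⟩, -⟩ := hA (sL • x)
  have hβα : β - sL • α ∈ Dsub M := by
    have := sub_mem (Submodule.smul_mem _ sL hxα) hsxβ
    rwa [smul_sub, sub_sub_sub_cancel_left] at this
  have hsplit : (⟨β - sL • α, hβα⟩ + ⟨sL • x - β, hsxβ⟩ : Dsub M) = sL • ⟨x - α, hxα⟩ := by
    ext
    simp only [Submodule.coe_add, Submodule.coe_smul, smul_sub]
    abel
  have hh := congrArg (fun ω => (h ω : M')) hsplit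
  simp only [map_add, map_smul, Submodule.coe_add, Submodule.coe_smul] at hh
  rw [apply_eq_of_sub_mem_Dsub hf hβ hsxβ, apply_eq_smul_add_of_sub_smul_mem_Dsub hg2 hα hβ hβα,
    apply_eq_of_sub_mem_Dsub hf hα hxα, smul_add, add_assoc, hh]

theorem stmt_13
    {M M' : Type} [AddCommGroup M] [Module L M] [AddCommGroup M'] [Module L M']
    (h : Dsub M ≃ₗ[L] Dsub M')
    (A : Set M) (hA : IsCR M A) (h0A : (0 : M) ∈ A)
    (A' : Set M') (hA' : IsCR M' A')
    (g : M → M') (hg : Set.BijOn g (Os A) (Os A')) (hgA : g '' A = A')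
    (hg1 : ∀ α ∈ A, (1 - sL * tL) • g α = (h ⟨(1 - sL * tL) • α, ⟨α, rfl⟩⟩ : M'))
    (hg2 : ∀ α ∈ A, ∀ ω (hω : ω ∈ Dsub M), sL • α + ω ∈ Os A →
      g (sL • α + ω) = sL • g α + (h ⟨ω, hω⟩ : M'))
    (f : M → M')
    (hf : ∀ α ∈ A, ∀ ω (hω : ω ∈ Dsub M), f (α + ω) = g α + (h ⟨ω, hω⟩ : M')) :
    ∀ x : M, f (sL • x) = sL • f x :=
  stmt_13_general h A hA g hg2 f hf
end
end
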